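/- arXiv:2106.06653 — 2 statements merged into one kernel-verified Lean document; each statement's English description precedes it below -/
import Mathlib

section
/- Let x, y be real with y ≤ √3/4 and |x| ≤ 1/8 + (√3/2)y (so that ρ^GS(x,y) is a density matrix), and let ρ^Γ denote the partial transpose of ρ^GS(x,y) with respect to the third tensor factor. Then ρ^Γ is positive semidefinite if and only if |x| + y/(2√3) ≤ 1/8; moreover ρ^Γ has at most one negative eigenvalue, and the sum of the absolute values of the negative eigenvalues of ρ^Γ (the negativity) equals max{0, |x| + y/(2√3) − 1/8}. -/
open Matrix
open scoped ComplexOrder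

noncomputable section

/-- Three-qubit index. -/
abbrev Q3 := Fin 2 × Fin 2 × Fin 2

/-- `|GHZ⁺⟩ = (|000⟩+|111⟩)/√2`. -/
def GHZp : Q3 → ℂ := fun v =>
  if v = (0, 0, 0) then (1 / Real.sqrt 2 : ℝ)
  else if v = (1, 1, 1) then (1 / Real.sqrt 2 : ℝ)
  else 0

/-- `|GHZ⁻⟩ = (|000⟩−|111⟩)/√2`. -/
def GHZm : Q3 → ℂ := fun v =>
  if v = (0, 0, 0) then (1 / Real.sqrt 2 : ℝ)
  else if v = (1, 1, 1) then -(1 / Real.sqrt 2 : ℝ)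
  else 0

/-- The GHZ-symmetric matrix
`ρ^GS(x,y) = (2y/√3 + x)|GHZ⁺⟩⟨GHZ⁺| + (2y/√3 − x)|GHZ⁻⟩⟨GHZ⁻| + ((√3−4y)/(8√3))·I₈`. -/
def rhoGS (x y : ℝ) : Matrix Q3 Q3 ℂ :=
  ((2 * y / Real.sqrt 3 + x : ℝ) : ℂ) • vecMulVec GHZp (star GHZp) +
  ((2 * y / Real.sqrt 3 - x : ℝ) : ℂ) • vecMulVec GHZm (star GHZm) +
  (((Real.sqrt 3 - 4 * y) / (8 * Real.sqrt 3) : ℝ) : ℂ) • (1 : Matrix Q3 Q3 ℂ)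

/-- Partial transpose with respect to the third qubit:
`|i j k⟩⟨i' j' k'| ↦ |i j k'⟩⟨i' j' k|`. -/
def ptranspose3 (ρ : Matrix Q3 Q3 ℂ) : Matrix Q3 Q3 ℂ := fun v w =>
  ρ (v.1, v.2.1, w.2.2) (w.1, w.2.1, v.2.2)


/-!
Partial transposition on the third qubit keeps the diagonal of `ρ^GS` and moves the GHZ coherence
`x (|000⟩⟨111| + |111⟩⟨000|)` to `x (|001⟩⟨110| + |110⟩⟨001|)`. So `ρ^Γ` is diagonal except on
`span {|001⟩, |110⟩}`, where a Hadamard rotation diagonalises it. Its spectrum is therefore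
`c + 2y/√3 = 1/8 + (√3/2) y` (twice), `c + x`, `c - x` and `c` (four times), with
`c = 1/8 - y/(2√3)`. The density-matrix constraints make all of these nonnegative except possibly
`c - |x|`.
-/

open Polynomial in
lemma Matrix.IsHermitian.eigenvalues_map_eq_of_eq_mul_diagonal_mul {n 𝕜 : Type*} [Fintype n]
    [DecidableEq n] [RCLike 𝕜] {A P Q : Matrix n n 𝕜} (hA : A.IsHermitian) (hQP : Q * P = 1)
    {d : n → ℝ} (h : A = P * diagonal (fun i => (d i : 𝕜)) * Q) :
    Finset.univ.val.map hA.eigenvalues = Finset.univ.val.map d := by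
  have hcharpoly : A.charpoly = ∏ i, (X - C (d i : 𝕜)) := by
    rw [h, charpoly_mul_comm, ← Matrix.mul_assoc, hQP, Matrix.one_mul, charpoly_diagonal]
  have hroots := hA.roots_charpoly_eq_eigenvalues
  rw [hcharpoly, roots_prod _ _ (Finset.prod_ne_zero_iff.mpr fun i _ => X_sub_C_ne_zero _)] at hroots
  simp only [roots_X_sub_C, Multiset.bind_singleton] at hroots
  exact Multiset.map_injective RCLike.ofReal_injective (by simpa [Multiset.map_map] using hroots.symm)

lemma Finset.sum_filter_comp_eq_of_map_eq {ι α M : Type*} [Fintype ι] [AddCommMonoid M]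
    {e d : ι → α} (h : univ.val.map e = univ.val.map d) (p : α → Prop) [DecidablePred p]
    (f : α → M) :
    ∑ i ∈ univ.filter (fun i => p (e i)), f (e i) = ∑ i ∈ univ.filter (fun i => p (d i)), f (d i) := by
  rw [sum_filter, sum_filter, ← sum_map_val, ← sum_map_val]
  simpa only [Multiset.map_map, Function.comp_def] using
    congrArg (fun m => (m.map fun a => if p a then f a else 0).sum) h

lemma forall_comp_iff_of_map_eq {ι α : Type*} [Fintype ι] {e d : ι → α}
    (h : Finset.univ.val.map e = Finset.univ.val.map d) (p : α → Prop) :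
    (∀ i, p (e i)) ↔ ∀ i, p (d i) := by
  simpa [Multiset.forall_mem_map_iff] using congrArg (fun m => ∀ a ∈ m, p a) h

lemma ite_neg_abs_add_ite_neg_abs {c t : ℝ} (hc : 0 ≤ c) :
    (if c + t < 0 then |c + t| else 0) + (if c - t < 0 then |c - t| else 0) = max 0 (|t| - c) := by
  grind [abs_of_neg, abs_cases]

lemma Matrix.IsHermitian.ptranspose3 {ρ : Matrix Q3 Q3 ℂ} (hρ : ρ.IsHermitian) :
    (ptranspose3 ρ).IsHermitian := by
  ext v w
  exact congr_fun₂ hρ _ _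

lemma isHermitian_rhoGS (x y : ℝ) : (rhoGS x y).IsHermitian := by
  have hreal (r : ℝ) : IsSelfAdjoint (r : ℂ) := Complex.conj_ofReal r
  exact (((posSemidef_vecMulVec_self_star GHZp).isHermitian.smul (hreal _)).add
    ((posSemidef_vecMulVec_self_star GHZm).isHermitian.smul (hreal _))).add
    (isHermitian_one.smul (hreal _))

/-- Its columns at `|001⟩` and `|110⟩` are `(|001⟩ ± |110⟩)/√2`; it fixes the other basis vectors. -/
def blockHadamard : Matrix Q3 Q3 ℂ := fun v w =>
  if v = (0, 0, 1) then
    if w = (0, 0, 1) ∨ w = (1, 1, 0) then (Real.sqrt 2 : ℂ)⁻¹ else 0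
  else if v = (1, 1, 0) then
    if w = (0, 0, 1) then (Real.sqrt 2 : ℂ)⁻¹
    else if w = (1, 1, 0) then -(Real.sqrt 2 : ℂ)⁻¹ else 0
  else if v = w then 1 else 0

def ghzPTSpectrum (s t c : ℝ) (v : Q3) : ℝ :=
  if v = (0, 0, 0) ∨ v = (1, 1, 1) then c + s
  else if v = (0, 0, 1) then c + t
  else if v = (1, 1, 0) then c - t
  else c

lemma sum_ghzPTSpectrum {M : Type*} [AddCommMonoid M] (s t c : ℝ) (g : ℝ → M) :
    ∑ v, g (ghzPTSpectrum s t c v) = 2 • g (c + s) + g (c + t) + g (c - t) + 4 • g c := by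
  simp [Fintype.sum_prod_type, ghzPTSpectrum]
  abel

lemma forall_ghzPTSpectrum (s t c : ℝ) (p : ℝ → Prop) :
    (∀ v, p (ghzPTSpectrum s t c v)) ↔ p (c + s) ∧ p (c + t) ∧ p (c - t) ∧ p c := by
  simp [Prod.forall, Fin.forall_fin_two, ghzPTSpectrum]
  tauto

lemma inv_sqrt_two_mul_self : (Real.sqrt 2 : ℂ)⁻¹ * (Real.sqrt 2 : ℂ)⁻¹ = 1 / 2 := by
  rw [← mul_inv, ← Complex.ofReal_mul, Real.mul_self_sqrt zero_le_two]; norm_num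

lemma inv_sqrt_two_mul_mul_inv_sqrt_two (a : ℂ) :
    (Real.sqrt 2 : ℂ)⁻¹ * a * (Real.sqrt 2 : ℂ)⁻¹ = a / 2 := by
  rw [mul_right_comm, inv_sqrt_two_mul_self]; ring

lemma blockHadamard_mul_self : blockHadamard * blockHadamard = 1 := by
  ext v w
  fin_cases v <;> fin_cases w <;>
    simp [mul_apply, Fintype.sum_prod_type, blockHadamard, one_apply, inv_sqrt_two_mul_self] <;>
    norm_num

lemma ptranspose3_ghzDiagonal (s t c : ℝ) :
    ptranspose3 (((s + t : ℝ) : ℂ) • vecMulVec GHZp (star GHZp) +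
      ((s - t : ℝ) : ℂ) • vecMulVec GHZm (star GHZm) + (c : ℂ) • 1) =
    blockHadamard * diagonal (fun v => (ghzPTSpectrum s t c v : ℂ)) * blockHadamard := by
  ext v w
  fin_cases v <;> fin_cases w <;>
    simp [mul_apply, Fintype.sum_prod_type, blockHadamard, ghzPTSpectrum, ptranspose3, GHZp, GHZm,
      vecMulVec_apply, one_apply, inv_sqrt_two_mul_self, inv_sqrt_two_mul_mul_inv_sqrt_two] <;>
    ring

section GHZSpectrum

variable {A : Matrix Q3 Q3 ℂ} (hA : A.IsHermitian) {s t c : ℝ}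

lemma posSemidef_iff_abs_le_of_eigenvalues_eq_ghzPTSpectrum
    (hspec : Finset.univ.val.map hA.eigenvalues = Finset.univ.val.map (ghzPTSpectrum s t c))
    (hc : 0 ≤ c) (hcs : 0 ≤ c + s) :
    A.PosSemidef ↔ |t| ≤ c := by
  simp only [hA.posSemidef_iff_eigenvalues_nonneg, Pi.le_def, Pi.zero_apply]
  rw [forall_comp_iff_of_map_eq hspec (0 ≤ ·), forall_ghzPTSpectrum, abs_le]
  constructor
  · rintro ⟨-, hplus, hminus, -⟩
    exact ⟨by linarith, by linarith⟩
  · rintro ⟨hle, hge⟩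
    exact ⟨hcs, by linarith, by linarith, hc⟩

lemma card_neg_eigenvalues_le_one_of_eq_ghzPTSpectrum
    (hspec : Finset.univ.val.map hA.eigenvalues = Finset.univ.val.map (ghzPTSpectrum s t c))
    (hc : 0 ≤ c) (hcs : 0 ≤ c + s) :
    (Finset.univ.filter (fun i => hA.eigenvalues i < 0)).card ≤ 1 := by
  rw [Finset.card_eq_sum_ones, Finset.sum_filter_comp_eq_of_map_eq hspec (· < 0) (fun _ => 1),
    Finset.sum_filter, sum_ghzPTSpectrum s t c (fun r => if r < 0 then 1 else 0),
    if_neg hcs.not_gt, if_neg hc.not_gt]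
  have : ¬(c + t < 0 ∧ c - t < 0) := fun ⟨hplus, hminus⟩ => by linarith
  split_ifs <;> simp_all

lemma sum_abs_neg_eigenvalues_of_eq_ghzPTSpectrum
    (hspec : Finset.univ.val.map hA.eigenvalues = Finset.univ.val.map (ghzPTSpectrum s t c))
    (hc : 0 ≤ c) (hcs : 0 ≤ c + s) :
    ∑ i ∈ Finset.univ.filter (fun i => hA.eigenvalues i < 0), |hA.eigenvalues i| =
      max 0 (|t| - c) := by
  rw [Finset.sum_filter_comp_eq_of_map_eq hspec (· < 0) abs, Finset.sum_filter,
    sum_ghzPTSpectrum s t c (fun r => if r < 0 then |r| else 0),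
    if_neg hcs.not_gt, if_neg hc.not_gt, ← ite_neg_abs_add_ite_neg_abs hc]
  simp only [smul_zero, zero_add, add_zero]

end GHZSpectrum

lemma sqrt_three_sub_div_eq (y : ℝ) :
    (Real.sqrt 3 - 4 * y) / (8 * Real.sqrt 3) = 1 / 8 - y / (2 * Real.sqrt 3) := by
  field_simp; ring

lemma sqrt_three_sub_div_add_eq (y : ℝ) :
    (Real.sqrt 3 - 4 * y) / (8 * Real.sqrt 3) + 2 * y / Real.sqrt 3 =
      1 / 8 + Real.sqrt 3 / 2 * y := by
  field_simp; linear_combination (-8 * y) * Real.sq_sqrt (show (0 : ℝ) ≤ 3 by norm_num)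

/-- for a GHZ-symmetric density matrix `ρ^GS(x,y)` (i.e. with
`y ≤ √3/4` and `|x| ≤ 1/8 + (√3/2)y`), its partial transpose `ρ^Γ` with
respect to the third qubit is positive semidefinite iff
`|x| + y/(2√3) ≤ 1/8`; moreover `ρ^Γ` is Hermitian with at most one negative
eigenvalue, and the sum of the absolute values of its negative eigenvalues
(the negativity) equals `max{0, |x| + y/(2√3) − 1/8}`. -/
theorem rhoGS_partial_transpose_negativity (x y : ℝ)
    (hy : y ≤ Real.sqrt 3 / 4) (hx : |x| ≤ 1 / 8 + Real.sqrt 3 / 2 * y) :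
    ((ptranspose3 (rhoGS x y)).PosSemidef ↔
      |x| + y / (2 * Real.sqrt 3) ≤ 1 / 8) ∧
    ∃ h : (ptranspose3 (rhoGS x y)).IsHermitian,
      (Finset.univ.filter (fun i : Q3 => h.eigenvalues i < 0)).card ≤ 1 ∧
      ∑ i ∈ Finset.univ.filter (fun i : Q3 => h.eigenvalues i < 0),
          |h.eigenvalues i| =
        max 0 (|x| + y / (2 * Real.sqrt 3) - 1 / 8) := by
  have hc0 : 0 ≤ (Real.sqrt 3 - 4 * y) / (8 * Real.sqrt 3) :=
    div_nonneg (by linarith) (by positivity)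
  have hcs0 : 0 ≤ (Real.sqrt 3 - 4 * y) / (8 * Real.sqrt 3) + 2 * y / Real.sqrt 3 :=
    sqrt_three_sub_div_add_eq y ▸ (abs_nonneg x).trans hx
  have hA := (isHermitian_rhoGS x y).ptranspose3
  have hspec := hA.eigenvalues_map_eq_of_eq_mul_diagonal_mul
    (d := ghzPTSpectrum (2 * y / Real.sqrt 3) x ((Real.sqrt 3 - 4 * y) / (8 * Real.sqrt 3)))
    blockHadamard_mul_self (ptranspose3_ghzDiagonal _ _ _)
  refine ⟨?_, hA, card_neg_eigenvalues_le_one_of_eq_ghzPTSpectrum hA hspec hc0 hcs0, ?_⟩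
  · rw [posSemidef_iff_abs_le_of_eigenvalues_eq_ghzPTSpectrum hA hspec hc0 hcs0,
      sqrt_three_sub_div_eq, le_sub_iff_add_le]
  · rw [sum_abs_neg_eigenvalues_of_eq_ghzPTSpectrum hA hspec hc0 hcs0, sqrt_three_sub_div_eq,
      sub_sub_eq_add_sub]
end
end

section
/- Fix real x, y, ϑ and set d = 1/4 − y/√3 and, for real θ, λ, c(θ,λ) = x sinθ (cosλ − i cosϑ sinλ). Then for all θ, λ one has 2·max{0, |c(θ,λ)| − d} ≤ 2·max{0, |x| + y/√3 − 1/4}, with equality at θ = π/2, λ = 0; hence the supremum over all θ, λ of 2·max{0, |c(θ,λ)| − d} equals 2·max{0, |x| + y/√3 − 1/4}. -/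
noncomputable section

open Complex

lemma norm_cos_sub_I_mul_mul_sin_le_one {a : ℝ} (ha : |a| ≤ 1) (lam : ℝ) :
    ‖(Real.cos lam : ℂ) - I * a * (Real.sin lam : ℝ)‖ ≤ 1 := by
  have ha2 : a ^ 2 ≤ 1 := by nlinarith [abs_nonneg a, sq_abs a]
  have hnormSq : normSq ((Real.cos lam : ℂ) - I * a * (Real.sin lam : ℝ)) ≤ 1 := by
    simp only [normSq_apply, sub_re, sub_im, mul_re, mul_im, I_re, I_im, ofReal_re, ofReal_im]
    nlinarith [Real.sin_sq_add_cos_sq lam, mul_le_mul_of_nonneg_right ha2 (sq_nonneg (Real.sin lam))]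
  rw [norm_def, Real.sqrt_le_one]
  exact hnormSq

lemma norm_ofReal_mul_sin_mul_le {z : ℂ} (hz : ‖z‖ ≤ 1) (x θ : ℝ) :
    ‖(x : ℂ) * (Real.sin θ : ℝ) * z‖ ≤ |x| := by
  rw [norm_mul, norm_mul, norm_real, norm_real, Real.norm_eq_abs, Real.norm_eq_abs]
  calc |x| * |Real.sin θ| * ‖z‖ ≤ |x| * 1 * 1 := by
        gcongr
        exact Real.abs_sin_le_one θ
    _ = |x| := by ring

/-- with `d = 1/4 − y/√3` and
`c(θ,λ) = x sinθ (cosλ − i cosϑ sinλ)`, the concurrence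
`2·max{0, |c(θ,λ)| − d}` of the localized X-shaped two-qubit state is bounded
by `2·max{0, |x| + y/√3 − 1/4}` for all measurement angles, with equality at
`θ = π/2, λ = 0`; hence its supremum over all `θ, λ` equals
`2·max{0, |x| + y/√3 − 1/4}`, the localizable concurrence of `ρ^GS(x,y)`. -/
theorem localizable_concurrence_of_GHZ_symmetric (x y ϑ : ℝ) :
    let d : ℝ := 1 / 4 - y / Real.sqrt 3
    let c : ℝ → ℝ → ℂ := fun θ lam =>
      (x : ℂ) * (Real.sin θ : ℝ) *
        ((Real.cos lam : ℝ) - Complex.I * (Real.cos ϑ : ℝ) * (Real.sin lam : ℝ))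
    (∀ θ lam : ℝ,
      2 * max 0 (‖c θ lam‖ - d) ≤
        2 * max 0 (|x| + y / Real.sqrt 3 - 1 / 4)) ∧
    2 * max 0 (‖c (Real.pi / 2) 0‖ - d) =
      2 * max 0 (|x| + y / Real.sqrt 3 - 1 / 4) ∧
    IsGreatest {z : ℝ | ∃ θ lam : ℝ, z = 2 * max 0 (‖c θ lam‖ - d)}
      (2 * max 0 (|x| + y / Real.sqrt 3 - 1 / 4)) := by
  intro d c
  have hd : |x| + y / Real.sqrt 3 - 1 / 4 = |x| - d := by ring
  have hc_le (θ lam : ℝ) : ‖c θ lam‖ ≤ |x| :=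
    norm_ofReal_mul_sin_mul_le
      (norm_cos_sub_I_mul_mul_sin_le_one (Real.abs_cos_le_one ϑ) lam) x θ
  have hc_attained : ‖c (Real.pi / 2) 0‖ = |x| := by simp [c]
  have hbound (θ lam : ℝ) :
      2 * max 0 (‖c θ lam‖ - d) ≤ 2 * max 0 (|x| + y / Real.sqrt 3 - 1 / 4) := by
    rw [hd]
    gcongr
    exact hc_le θ lam
  have hattained :
      2 * max 0 (‖c (Real.pi / 2) 0‖ - d) = 2 * max 0 (|x| + y / Real.sqrt 3 - 1 / 4) := by
    rw [hc_attained, hd]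
  refine ⟨hbound, hattained, ⟨Real.pi / 2, 0, hattained.symm⟩, ?_⟩
  rintro z ⟨θ, lam, rfl⟩
  exact hbound θ lam
end
end
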